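/- arXiv:2006.07554 — 5 statements merged into one kernel-verified Lean document; each statement's English description precedes it below -/
import Mathlib

section
/- Let ψ ∈ ℝⁿ be a fixed agent parameter, let f : ℝ → ℝⁿ be the hyper-parameter-to-update map η ↦ f(η) (the off-policy update f(ψ, D, η) with ψ and the replay buffer D held fixed), and let L : ℝⁿ → ℝ be the meta-objective, which does not depend explicitly on the hyper-parameter (so ∇_η L = 0). Assume f is continuously differentiable, L is continuously differentiable, and the composite map g : ℝ → ℝ, g(η) = L(ψ + f(η)), is twice differentiable with globally bounded second derivative. Then the expected ES hyper-parameter update satisfies lim_{σ → 0⁺} (1/σ) ∫_ℝ g(μ + σ·ε) · ε dγ(ε) = ⟪∇L(ψ + f(μ)), f′(μ)⟫, where γ is the standard Gaussian measure on ℝ (mean 0, variance 1) and ⟪·,·⟫ is the Euclidean inner product on ℝⁿ. (This is Proposition 1: in the small-variance limit, the expected Evolutionary-Strategies update of the hyper-parameter mean equals the meta-gradient [∇_ψ L(ψ)]_{ψ = ψ_t + f(ψ_t, D, μ)} [∇_μ f(ψ_t, D, μ)].) -/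
open MeasureTheory ProbabilityTheory Filter Real
open scoped RealInnerProductSpace NNReal Topology

/-!
Write `g(μ + σε) = g(μ) + σ g'(μ) ε + R(σε)` with `|R(h)| ≤ M h²`, which holds because `g'` is
`M`-Lipschitz. Against `ε dγ(ε)` the constant term integrates to `0` (mean zero), the linear term
to `σ g'(μ)` (unit variance), and the remainder to at most `M σ² E|ε|³`. Hence the ES estimate
differs from `g'(μ)` by at most `M E|ε|³ σ`, and `g'(μ) = ⟪∇L(ψ + f(μ)), f'(μ)⟫` by the chain rule.
-/

theorem HasGradientAt.comp_hasDerivAt {E : Type*} [NormedAddCommGroup E] [InnerProductSpace ℝ E]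
    [CompleteSpace E] {L : E → ℝ} {L' : E} {f : ℝ → E} {f' : E} {x : ℝ}
    (hL : HasGradientAt L L' (f x)) (hf : HasDerivAt f f' x) :
    HasDerivAt (fun η => L (f η)) ⟪L', f'⟫ x :=
  (hasGradientAt_iff_hasFDerivAt.mp hL).comp_hasDerivAt x hf

theorem abs_sub_sub_mul_le_of_lipschitzWith {g g' : ℝ → ℝ} {K : ℝ≥0}
    (hg : ∀ x, HasDerivAt g (g' x) x) (hg' : LipschitzWith K g') (x y : ℝ) :
    |g y - g x - g' x * (y - x)| ≤ K * (y - x) ^ 2 := by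
  have hderiv : ∀ t ∈ Set.uIcc x y,
      HasDerivWithinAt (fun t => g t - g' x * t) (g' t - g' x) (Set.uIcc x y) t := fun t _ => by
    have := (hg t).sub ((hasDerivAt_id t).const_mul (g' x))
    rw [mul_one] at this
    exact this.hasDerivWithinAt
  have hbound : ∀ t ∈ Set.uIcc x y, ‖g' t - g' x‖ ≤ K * |y - x| := fun t ht =>
    calc ‖g' t - g' x‖ ≤ K * |t - x| := hg'.dist_le_mul t x
      _ ≤ K * |y - x| := mul_le_mul_of_nonneg_left (Set.abs_sub_left_of_mem_uIcc ht) K.coe_nonneg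
  have hmvt := (convex_uIcc x y).norm_image_sub_le_of_norm_hasDerivWithin_le hderiv hbound
    Set.left_mem_uIcc Set.right_mem_uIcc
  calc |g y - g x - g' x * (y - x)| = ‖(g y - g' x * y) - (g x - g' x * x)‖ := by
        rw [Real.norm_eq_abs]; ring_nf
    _ ≤ K * |y - x| * |y - x| := hmvt
    _ = K * (y - x) ^ 2 := by rw [mul_assoc, abs_mul_abs_self, sq]

theorem integral_sq_gaussianReal_zero (v : ℝ≥0) : ∫ x, x ^ 2 ∂gaussianReal 0 v = v := by
  simpa [variance_eq_integral measurable_id.aemeasurable] using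
    variance_id_gaussianReal (μ := 0) (v := v)

section EvolutionStrategies

variable {ν : Measure ℝ} [IsFiniteMeasure ν] {g g' : ℝ → ℝ} {K : ℝ≥0}

theorem abs_one_div_mul_integral_comp_mul_sub_le (hν : MemLp id 3 ν)
    (hmean : ∫ ε, ε ∂ν = 0) (hvar : ∫ ε, ε ^ 2 ∂ν = 1)
    (hg : ∀ x, HasDerivAt g (g' x) x) (hg' : LipschitzWith K g') (μ : ℝ) {σ : ℝ} (hσ : 0 < σ) :
    |1 / σ * ∫ ε, g (μ + σ * ε) * ε ∂ν - g' μ| ≤ K * (∫ ε, |ε| ^ 3 ∂ν) * σ := by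
  have hint1 : Integrable (fun ε => ε) ν := hν.integrable (by norm_num)
  have hint2 : Integrable (fun ε => ε ^ 2) ν :=
    (hν.mono_exponent (by norm_num)).integrable_sq
  have hint3 : Integrable (fun ε => |ε| ^ 3) ν := by
    simpa using hν.integrable_norm_pow' (p := 3)
  set R := fun ε => (g (μ + σ * ε) - g μ - g' μ * (σ * ε)) * ε
  have hR : ∀ ε, ‖R ε‖ ≤ K * σ ^ 2 * |ε| ^ 3 := fun ε => by
    have htaylor := abs_sub_sub_mul_le_of_lipschitzWith hg hg' μ (μ + σ * ε)
    rw [add_sub_cancel_left] at htaylor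
    calc ‖R ε‖ = |g (μ + σ * ε) - g μ - g' μ * (σ * ε)| * |ε| := by
          rw [Real.norm_eq_abs, abs_mul]
      _ ≤ K * (σ * ε) ^ 2 * |ε| := by gcongr
      _ = K * σ ^ 2 * |ε| ^ 3 := by rw [mul_pow, ← sq_abs ε]; ring
  have hgc : Continuous g := continuous_iff_continuousAt.2 fun x => (hg x).continuousAt
  have hRint : Integrable R ν :=
    (hint3.const_mul _).mono' (by fun_prop : Continuous R).aestronglyMeasurable (ae_of_all _ hR)
  have hsplit : ∫ ε, g (μ + σ * ε) * ε ∂ν = σ * g' μ + ∫ ε, R ε ∂ν := by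
    have hdecomp : (fun ε => g (μ + σ * ε) * ε)
        = fun ε => (g μ * ε + σ * g' μ * ε ^ 2) + R ε := by
      funext ε; simp only [R]; ring
    have hquad : Integrable (fun ε => g μ * ε + σ * g' μ * ε ^ 2) ν :=
      (hint1.const_mul _).add (hint2.const_mul _)
    rw [hdecomp, integral_add hquad hRint,
      integral_add (f := fun ε => g μ * ε) (hint1.const_mul _) (hint2.const_mul _),
      integral_const_mul, integral_const_mul, hmean, hvar]
    ring
  have hRbound : ‖∫ ε, R ε ∂ν‖ ≤ K * σ ^ 2 * ∫ ε, |ε| ^ 3 ∂ν := by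
    simpa [integral_const_mul] using
      norm_integral_le_of_norm_le (hint3.const_mul _) (ae_of_all _ hR)
  calc |1 / σ * ∫ ε, g (μ + σ * ε) * ε ∂ν - g' μ| = 1 / σ * ‖∫ ε, R ε ∂ν‖ := by
        rw [hsplit, mul_add, ← mul_assoc, one_div_mul_cancel hσ.ne', one_mul, add_sub_cancel_left,
          Real.norm_eq_abs, abs_mul, abs_of_pos (one_div_pos.2 hσ)]
    _ ≤ 1 / σ * (K * σ ^ 2 * ∫ ε, |ε| ^ 3 ∂ν) := by gcongr
    _ = K * (∫ ε, |ε| ^ 3 ∂ν) * σ := by field_simp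

theorem tendsto_one_div_mul_integral_comp_mul (hν : MemLp id 3 ν)
    (hmean : ∫ ε, ε ∂ν = 0) (hvar : ∫ ε, ε ^ 2 ∂ν = 1)
    (hg : ∀ x, HasDerivAt g (g' x) x) (hg' : LipschitzWith K g') (μ : ℝ) :
    Tendsto (fun σ => 1 / σ * ∫ ε, g (μ + σ * ε) * ε ∂ν) (𝓝[>] 0) (𝓝 (g' μ)) := by
  have hlin : Tendsto (fun σ : ℝ => K * (∫ ε, |ε| ^ 3 ∂ν) * σ) (𝓝[>] 0) (𝓝 0) :=
    ((continuous_const_mul _).tendsto' 0 0 (mul_zero _)).mono_left nhdsWithin_le_nhds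
  refine tendsto_iff_norm_sub_tendsto_zero.2 (squeeze_zero' (Eventually.of_forall
    fun _ => norm_nonneg _) ?_ hlin)
  filter_upwards [self_mem_nhdsWithin] with σ hσ
  exact abs_one_div_mul_integral_comp_mul_sub_le hν hmean hvar hg hg' μ hσ

end EvolutionStrategies

theorem oht_es_meta_gradient_limit_general (n : ℕ)
    (ψ : EuclideanSpace ℝ (Fin n)) (f : ℝ → EuclideanSpace ℝ (Fin n))
    (L : EuclideanSpace ℝ (Fin n) → ℝ) (μ : ℝ)
    (hf : ContDiff ℝ 1 f) (hL : ContDiff ℝ 1 L)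
    (g : ℝ → ℝ) (hg : g = fun η => L (ψ + f η))
    (hg2 : ∀ x : ℝ, DifferentiableAt ℝ (deriv g) x)
    (M : ℝ) (hM : ∀ x : ℝ, |deriv (deriv g) x| ≤ M) :
    Filter.Tendsto
      (fun σ : ℝ => (1 / σ) * ∫ ε : ℝ, g (μ + σ * ε) * ε ∂(gaussianReal 0 1))
      (nhdsWithin 0 (Set.Ioi 0))
      (nhds ⟪gradient L (ψ + f μ), deriv f μ⟫) := by
  have hchain : ∀ x, HasDerivAt g ⟪gradient L (ψ + f x), deriv f x⟫ x := fun x => by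
    rw [hg]
    exact (hL.differentiable one_ne_zero _).hasGradientAt.comp_hasDerivAt
      ((hf.differentiable one_ne_zero x).hasDerivAt.const_add ψ)
  have hlip : LipschitzWith M.toNNReal (deriv g) :=
    lipschitzWith_of_nnnorm_deriv_le hg2 fun x => by
      rw [← NNReal.coe_le_coe, coe_nnnorm, Real.coe_toNNReal _ ((abs_nonneg _).trans (hM 0))]
      exact hM x
  rw [← (hchain μ).deriv]
  exact tendsto_one_div_mul_integral_comp_mul (memLp_id_gaussianReal 3) integral_id_gaussianReal
    (by simpa using integral_sq_gaussianReal_zero 1)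
    (fun x => (hchain x).differentiableAt.hasDerivAt) hlip μ

/-- Proposition 1 of the paper: for fixed agent parameter `ψ ∈ ℝⁿ`, a continuously
differentiable hyper-parameter-to-update map `f : ℝ → ℝⁿ` and a continuously differentiable
meta-objective `L : ℝⁿ → ℝ` (with no explicit dependence on the hyper-parameter), if the
composite `g(η) = L(ψ + f(η))` is twice differentiable with globally bounded second
derivative, then the expected ES hyper-parameter update satisfies
`lim_{σ→0⁺} (1/σ) ∫ g(μ + σε) ε dγ(ε) = ⟪∇L(ψ + f(μ)), f′(μ)⟫`,
where `γ` is the standard Gaussian measure on `ℝ`. -/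
theorem oht_es_meta_gradient_limit (n : ℕ)
    (ψ : EuclideanSpace ℝ (Fin n)) (f : ℝ → EuclideanSpace ℝ (Fin n))
    (L : EuclideanSpace ℝ (Fin n) → ℝ) (μ : ℝ)
    (hf : ContDiff ℝ 1 f) (hL : ContDiff ℝ 1 L)
    (g : ℝ → ℝ) (hg : g = fun η => L (ψ + f η))
    (hg1 : ∀ x : ℝ, DifferentiableAt ℝ g x)
    (hg2 : ∀ x : ℝ, DifferentiableAt ℝ (deriv g) x)
    (M : ℝ) (hM : ∀ x : ℝ, |deriv (deriv g) x| ≤ M) :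
    Filter.Tendsto
      (fun σ : ℝ => (1 / σ) * ∫ ε : ℝ, g (μ + σ * ε) * ε ∂(gaussianReal 0 1))
      (nhdsWithin 0 (Set.Ioi 0))
      (nhds ⟪gradient L (ψ + f μ), deriv f μ⟫) :=
  oht_es_meta_gradient_limit_general n ψ f L μ hf hL g hg hg2 M hM
end

section
/- Let g : ℝ → ℝ be twice differentiable with globally bounded second derivative, and let μ ∈ ℝ. Then lim_{σ → 0⁺} (1/σ) ∫_ℝ g(μ + σ·ε) · ε dγ(ε) = g′(μ), where γ is the standard Gaussian measure on ℝ. (Core analytic step in the proof of Proposition 1: after Taylor-expanding g(μ + σε) = g(μ) + σε g′(μ) + O(σ²ε²), the zeroth-order term vanishes because E[ε] = 0 and the second-order term vanishes in the limit σ → 0.) -/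
/-!
By Taylor's theorem, `g (μ + σ ε) = g μ + σ ε g'(μ) + R` with `|R| ≤ M σ² ε²`. Multiplied by `ε`
and averaged over the noise, the constant term vanishes because `E ε = 0`, the linear term gives
`σ g'(μ)` because `E ε² = 1`, and the remainder contributes at most `M σ² E |ε|³`. Hence the
estimator is within `M σ E |ε|³` of `g'(μ)`; only these three moments of the noise distribution
enter the argument.
-/

open MeasureTheory ProbabilityTheory Filter Real Set
open scoped Topology

theorem abs_sub_sub_mul_deriv_le_mul_sq {g : ℝ → ℝ} {M : ℝ} (hg : ∀ x, DifferentiableAt ℝ g x)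
    (hg' : ∀ x, DifferentiableAt ℝ (deriv g) x) (hM : ∀ x, |deriv (deriv g) x| ≤ M)
    (μ x : ℝ) : |g x - g μ - (x - μ) * deriv g μ| ≤ M * (x - μ) ^ 2 := by
  have hlip : ∀ y, |deriv g y - deriv g μ| ≤ M * |y - μ| := fun y =>
    Convex.norm_image_sub_le_of_norm_deriv_le (fun z _ => hg' z) (fun z _ => hM z)
      convex_univ (mem_univ μ) (mem_univ y)
  have hbound : ∀ y ∈ uIcc μ x, ‖deriv g y - deriv g μ‖ ≤ M * |x - μ| := fun y hy =>
    (hlip y).trans (mul_le_mul_of_nonneg_left (abs_sub_left_of_mem_uIcc hy)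
      ((abs_nonneg _).trans (hM μ)))
  have hderiv : ∀ y ∈ uIcc μ x, HasDerivWithinAt (fun y => g y - y * deriv g μ)
      (deriv g y - deriv g μ) (uIcc μ x) y := fun y _ =>
    ((hg y).hasDerivAt.sub ((hasDerivAt_id y).mul_const _)).hasDerivWithinAt.congr_deriv
      (by simp)
  calc |g x - g μ - (x - μ) * deriv g μ|
      = ‖(g x - x * deriv g μ) - (g μ - μ * deriv g μ)‖ := by rw [Real.norm_eq_abs]; ring_nf
    _ ≤ M * |x - μ| * ‖x - μ‖ :=
      Convex.norm_image_sub_le_of_norm_hasDerivWithin_le hderiv hbound (convex_uIcc μ x)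
        left_mem_uIcc right_mem_uIcc
    _ = M * (x - μ) ^ 2 := by rw [Real.norm_eq_abs, mul_assoc, abs_mul_abs_self, sq]

theorem integral_sq_gaussianReal_zero_one : ∫ x, x ^ 2 ∂gaussianReal 0 1 = 1 := by
  have := variance_of_integral_eq_zero aemeasurable_id' (integral_id_gaussianReal (μ := 0) (v := 1))
  rw [variance_fun_id_gaussianReal] at this
  exact_mod_cast this.symm

noncomputable def esGradient (ν : Measure ℝ) (g : ℝ → ℝ) (μ σ : ℝ) : ℝ :=
  (1 / σ) * ∫ ε, g (μ + σ * ε) * ε ∂ν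

theorem abs_esGradient_sub_le {ν : Measure ℝ} [IsFiniteMeasure ν] (h3 : MemLp id 3 ν)
    (hmean : ∫ ε, ε ∂ν = 0) (hvar : ∫ ε, ε ^ 2 ∂ν = 1)
    {g : ℝ → ℝ} (hg : Measurable g) {μ L M : ℝ}
    (hr : ∀ x, |g x - g μ - (x - μ) * L| ≤ M * (x - μ) ^ 2) {σ : ℝ} (hσ : 0 < σ) :
    |esGradient ν g μ σ - L| ≤ M * (∫ ε, |ε| ^ 3 ∂ν) * σ := by
  have hint1 : Integrable (fun ε => ε) ν := h3.integrable (by norm_num)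
  have hint2 : Integrable (fun ε => ε ^ 2) ν := (h3.mono_exponent (by norm_num)).integrable_sq
  have hint3 : Integrable (fun ε => |ε| ^ 3) ν := by simpa using h3.integrable_norm_pow'
  set R := fun ε => (g (μ + σ * ε) - g μ - σ * ε * L) * ε
  have hR : ∀ ε, ‖R ε‖ ≤ M * σ ^ 2 * |ε| ^ 3 := fun ε => by
    have := hr (μ + σ * ε)
    rw [add_sub_cancel_left] at this
    calc ‖R ε‖ = |g (μ + σ * ε) - g μ - σ * ε * L| * |ε| := by rw [Real.norm_eq_abs, abs_mul]
      _ ≤ M * (σ * ε) ^ 2 * |ε| := by gcongr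
      _ = M * σ ^ 2 * |ε| ^ 3 := by rw [mul_pow, ← sq_abs ε]; ring
  have hRint : Integrable R ν := (hint3.const_mul _).mono' (by fun_prop) (ae_of_all _ hR)
  have hsplit : ∫ ε, g (μ + σ * ε) * ε ∂ν = σ * L + ∫ ε, R ε ∂ν := by
    calc ∫ ε, g (μ + σ * ε) * ε ∂ν = ∫ ε, g μ * ε + σ * L * ε ^ 2 + R ε ∂ν := by
          congr 1; ext ε; ring
      _ = σ * L + ∫ ε, R ε ∂ν := by
          rw [integral_add ((hint1.const_mul _).fun_add (hint2.const_mul _)) hRint,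
            integral_add (hint1.const_mul _) (hint2.const_mul _), integral_const_mul,
            integral_const_mul, hmean, hvar]
          ring
  have hRbound : |∫ ε, R ε ∂ν| ≤ M * σ ^ 2 * ∫ ε, |ε| ^ 3 ∂ν := by
    rw [← integral_const_mul]
    exact norm_integral_le_of_norm_le (hint3.const_mul _) (ae_of_all _ hR)
  rw [esGradient, hsplit,
    show 1 / σ * (σ * L + ∫ ε, R ε ∂ν) - L = (∫ ε, R ε ∂ν) / σ by field_simp; ring,
    abs_div, abs_of_pos hσ, div_le_iff₀ hσ]
  linarith

/-- Core analytic step of Proposition 1: for `g : ℝ → ℝ` twice differentiable with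
globally bounded second derivative, the expected single-sample ES gradient estimate
`(1/σ) ∫ g(μ + σε) ε dγ(ε)` converges to `g′(μ)` as `σ → 0⁺`, where `γ` is the
standard Gaussian measure on `ℝ`. -/
theorem es_gradient_limit (g : ℝ → ℝ) (μ : ℝ)
    (hg : ∀ x : ℝ, DifferentiableAt ℝ g x)
    (hg' : ∀ x : ℝ, DifferentiableAt ℝ (deriv g) x)
    (M : ℝ) (hM : ∀ x : ℝ, |deriv (deriv g) x| ≤ M) :
    Filter.Tendsto
      (fun σ : ℝ => (1 / σ) * ∫ ε : ℝ, g (μ + σ * ε) * ε ∂(gaussianReal 0 1))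
      (nhdsWithin 0 (Set.Ioi 0)) (nhds (deriv g μ)) := by
  change Tendsto (esGradient (gaussianReal 0 1) g μ) _ _
  set C := M * ∫ ε, |ε| ^ 3 ∂gaussianReal 0 1
  have herror : ∀ σ ∈ Ioi (0 : ℝ), ‖esGradient (gaussianReal 0 1) g μ σ - deriv g μ‖ ≤ C * σ :=
    fun σ hσ => abs_esGradient_sub_le (memLp_id_gaussianReal 3) integral_id_gaussianReal
      integral_sq_gaussianReal_zero_one (Differentiable.continuous hg).measurable
      (abs_sub_sub_mul_deriv_le_mul_sq hg hg' hM μ) hσ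
  have hCσ : Tendsto (fun σ : ℝ => C * σ) (𝓝[>] 0) (𝓝 0) :=
    tendsto_nhdsWithin_of_tendsto_nhds (by simpa using (continuous_const_mul C).tendsto 0)
  rw [← tendsto_sub_nhds_zero_iff]
  exact squeeze_zero_norm' (eventually_nhdsWithin_of_forall herror) hCσ
end

section
/- Let g : ℝ → ℝ be twice differentiable with |g″(x)| ≤ M for all x ∈ ℝ, let μ ∈ ℝ and σ > 0. Then the expected one-sample ES gradient estimate deviates from the true derivative by at most a quantity linear in σ: | (1/σ) ∫_ℝ g(μ + σ·ε) · ε dγ(ε) − g′(μ) | ≤ (M σ / 2) · ∫_ℝ |ε|³ dγ(ε) = M σ √(2/π), where γ is the standard Gaussian measure on ℝ. (Quantitative version of the Taylor-expansion argument in the proof of Proposition 1.) -/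
open MeasureTheory ProbabilityTheory Real Set

/-!
Taylor's theorem with Lagrange-type remainder gives
`g (μ + σ ε) = g μ + σ ε g' μ + R ε` with `|R ε| ≤ M σ² ε² / 2`. Against the weight `ε`, the
first term integrates to `0` (mean zero) and the second to `σ g' μ` (second moment one), so the
bias of the estimate is `(1/σ) ∫ R ε · ε`, bounded by `(M σ / 2) ∫ |ε|³`. The Gaussian third
absolute moment is a Gamma integral: `∫ |x|³ e^{-x²/2} dx = 4`.
-/

theorem exists_mem_uIoo_ratio_hasDerivAt_eq_ratio_slope {f f' g g' : ℝ → ℝ} {a b : ℝ}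
    (hab : a ≠ b) (hfc : ContinuousOn f (uIcc a b)) (hff' : ∀ x ∈ uIoo a b, HasDerivAt f (f' x) x)
    (hgc : ContinuousOn g (uIcc a b)) (hgg' : ∀ x ∈ uIoo a b, HasDerivAt g (g' x) x) :
    ∃ c ∈ uIoo a b, (g b - g a) * f' c = (f b - f a) * g' c := by
  rcases hab.lt_or_gt with h | h
  · rw [uIcc_of_lt h] at hfc hgc
    rw [uIoo_of_lt h] at hff' hgg' ⊢
    exact exists_ratio_hasDerivAt_eq_ratio_slope f f' h hfc hff' g g' hgc hgg'
  · rw [uIcc_of_gt h] at hfc hgc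
    rw [uIoo_of_gt h] at hff' hgg' ⊢
    obtain ⟨c, hc, hslope⟩ := exists_ratio_hasDerivAt_eq_ratio_slope f f' h hfc hff' g g' hgc hgg'
    exact ⟨c, hc, by linear_combination -hslope⟩

theorem abs_sub_sub_deriv_mul_le_of_abs_deriv_deriv_le {g : ℝ → ℝ} {M : ℝ}
    (hg : Differentiable ℝ g) (hg' : Differentiable ℝ (deriv g))
    (hM : ∀ x, |deriv (deriv g) x| ≤ M) (x y : ℝ) :
    |g y - g x - deriv g x * (y - x)| ≤ M / 2 * (y - x) ^ 2 := by
  rcases eq_or_ne x y with rfl | hxy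
  · simp
  have hlip (z : ℝ) : |deriv g z - deriv g x| ≤ M * |z - x| := by
    simpa using Convex.norm_image_sub_le_of_norm_deriv_le (fun z _ => hg' z)
      (fun z _ => (hM z).trans_eq' (norm_eq_abs _)) convex_univ (mem_univ x) (mem_univ z)
  have hφ (z : ℝ) : HasDerivAt (fun z => g z - g x - deriv g x * (z - x))
      (deriv g z - deriv g x) z := by
    simpa using ((hg z).hasDerivAt.sub_const (g x)).fun_sub
      (((hasDerivAt_id' z).sub_const x).const_mul (deriv g x))
  have hψ (z : ℝ) : HasDerivAt (fun z => (z - x) ^ 2) (2 * (z - x)) z := by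
    simpa using ((hasDerivAt_id' z).sub_const x).fun_pow 2
  -- Cauchy's mean value theorem against `(z - x) ^ 2` produces the factor `1 / 2`.
  obtain ⟨c, hc, hslope⟩ := exists_mem_uIoo_ratio_hasDerivAt_eq_ratio_slope hxy
    (HasDerivAt.continuousOn fun z _ => hφ z) (fun z _ => hφ z)
    (HasDerivAt.continuousOn fun z _ => hψ z) (fun z _ => hψ z)
  have hcx : 0 < |c - x| := abs_pos.2 (sub_ne_zero.2 (ne_of_mem_of_not_mem hc left_notMem_uIoo))
  refine le_of_mul_le_mul_right ?_ hcx
  calc |g y - g x - deriv g x * (y - x)| * |c - x|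
      = |(y - x) ^ 2 * (deriv g c - deriv g x) / 2| := by
        rw [← abs_mul]
        congr 1
        linear_combination (-1 / 2 : ℝ) * hslope
    _ = (y - x) ^ 2 * |deriv g c - deriv g x| / 2 := by
        rw [abs_div, abs_mul, abs_sq, abs_two]
    _ ≤ (y - x) ^ 2 * (M * |c - x|) / 2 := by gcongr; exact hlip c
    _ = M / 2 * (y - x) ^ 2 * |c - x| := by ring

theorem abs_one_div_mul_integral_comp_add_mul_mul_sub_deriv_le {ν : Measure ℝ}
    [IsFiniteMeasure ν] (hν : MemLp id 3 ν) (hmean : ∫ x, x ∂ν = 0) (hvar : ∫ x, x ^ 2 ∂ν = 1)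
    {g : ℝ → ℝ} {M : ℝ} (hg : Differentiable ℝ g) (hg' : Differentiable ℝ (deriv g))
    (hM : ∀ x, |deriv (deriv g) x| ≤ M) (μ : ℝ) {σ : ℝ} (hσ : 0 < σ) :
    |(1 / σ) * ∫ x, g (μ + σ * x) * x ∂ν - deriv g μ| ≤ M * σ / 2 * ∫ x, |x| ^ 3 ∂ν := by
  set R : ℝ → ℝ := fun x => g (μ + σ * x) - g μ - deriv g μ * (σ * x)
  have hR (x : ℝ) : |R x * x| ≤ M * σ ^ 2 / 2 * |x| ^ 3 := by
    have hTaylor := abs_sub_sub_deriv_mul_le_of_abs_deriv_deriv_le hg hg' hM μ (μ + σ * x)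
    rw [add_sub_cancel_left] at hTaylor
    calc |R x * x| = |R x| * |x| := abs_mul _ _
      _ ≤ M / 2 * (σ * x) ^ 2 * |x| := by gcongr
      _ = M * σ ^ 2 / 2 * |x| ^ 3 := by rw [mul_pow, ← sq_abs x]; ring
  have hint₁ : Integrable (fun x => x) ν := hν.integrable (by norm_num)
  have hint₂ : Integrable (fun x => x ^ 2) ν := (hν.mono_exponent (by norm_num)).integrable_sq
  have hint₃ : Integrable (fun x => |x| ^ 3) ν := by simpa using hν.integrable_norm_pow' (p := 3)
  have hintR : Integrable (fun x => R x * x) ν := by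
    refine (hint₃.const_mul _).mono' ?_ (ae_of_all _ hR)
    have hgc := hg.continuous
    exact Continuous.aestronglyMeasurable (by fun_prop)
  have hsplit : ∫ x, g (μ + σ * x) * x ∂ν = σ * deriv g μ + ∫ x, R x * x ∂ν := by
    have hpoint : (fun x => g (μ + σ * x) * x)
        = fun x => g μ * x + deriv g μ * σ * x ^ 2 + R x * x := by
      funext x; simp only [R]; ring
    rw [hpoint, integral_add ((hint₁.const_mul _).fun_add (hint₂.const_mul _)) hintR,
      integral_add (hint₁.const_mul _) (hint₂.const_mul _), integral_const_mul,
      integral_const_mul, hmean, hvar]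
    ring
  calc |(1 / σ) * ∫ x, g (μ + σ * x) * x ∂ν - deriv g μ|
      = (1 / σ) * |∫ x, R x * x ∂ν| := by
        rw [hsplit, mul_add, ← mul_assoc, one_div_mul_cancel hσ.ne', one_mul, add_sub_cancel_left,
          abs_mul, abs_of_pos (one_div_pos.2 hσ)]
    _ ≤ (1 / σ) * ∫ x, M * σ ^ 2 / 2 * |x| ^ 3 ∂ν := by
        gcongr
        exact abs_integral_le_integral_abs.trans (integral_mono hintR.abs (hint₃.const_mul _) hR)
    _ = M * σ / 2 * ∫ x, |x| ^ 3 ∂ν := by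
        rw [integral_const_mul]; field_simp

theorem integral_abs_pow_three_mul_exp_neg_mul_sq {b : ℝ} (hb : 0 < b) :
    ∫ x : ℝ, |x| ^ 3 * rexp (-b * x ^ 2) = 1 / b ^ 2 := by
  have hIoi := integral_rpow_mul_exp_neg_mul_rpow (p := 2) (q := 3) two_pos (by norm_num) hb
  have hGamma : Gamma 2 = 1 := by simp
  simp only [rpow_ofNat] at hIoi
  conv_lhs => enter [2, x]; rw [← sq_abs x]
  rw [integral_comp_abs (f := fun x => x ^ 3 * rexp (-b * x ^ 2)), hIoi]
  norm_num [hGamma]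
  ring

theorem integral_abs_pow_three_gaussianReal :
    ∫ x, |x| ^ 3 ∂gaussianReal 0 1 = 2 * √(2 / π) := by
  have hdensity (x : ℝ) : gaussianPDFReal 0 1 x * |x| ^ 3
      = (√(2 * π))⁻¹ * (|x| ^ 3 * rexp (-(1 / 2) * x ^ 2)) := by
    simp only [gaussianPDFReal, NNReal.coe_one, mul_one, sub_zero]
    ring_nf
  simp only [integral_gaussianReal_eq_integral_smul one_ne_zero, smul_eq_mul, hdensity,
    integral_const_mul, integral_abs_pow_three_mul_exp_neg_mul_sq one_half_pos]
  rw [sqrt_div' 2 pi_pos.le, sqrt_mul' 2 pi_pos.le]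
  have h2 : √2 ^ 2 = 2 := sq_sqrt zero_le_two
  field_simp
  linear_combination -h2

/-- Quantitative Taylor-expansion bound in the proof of Proposition 1: if `g : ℝ → ℝ` is
twice differentiable with `|g″| ≤ M` everywhere, `μ ∈ ℝ` and `σ > 0`, then the expected
one-sample ES gradient estimate deviates from `g′(μ)` by at most
`(Mσ/2) ∫ |ε|³ dγ(ε) = Mσ√(2/π)`, where `γ` is the standard Gaussian measure on `ℝ`. -/
theorem es_gradient_estimate_bias_bound (g : ℝ → ℝ) (μ σ : ℝ) (hσ : 0 < σ)
    (hg : ∀ x : ℝ, DifferentiableAt ℝ g x)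
    (hg' : ∀ x : ℝ, DifferentiableAt ℝ (deriv g) x)
    (M : ℝ) (hM : ∀ x : ℝ, |deriv (deriv g) x| ≤ M) :
    |(1 / σ) * (∫ ε : ℝ, g (μ + σ * ε) * ε ∂(gaussianReal 0 1)) - deriv g μ|
        ≤ (M * σ / 2) * ∫ ε : ℝ, |ε| ^ 3 ∂(gaussianReal 0 1)
      ∧ (M * σ / 2) * (∫ ε : ℝ, |ε| ^ 3 ∂(gaussianReal 0 1))
        = M * σ * Real.sqrt (2 / Real.pi) := by
  have hsecond : ∫ x, x ^ 2 ∂gaussianReal 0 1 = 1 := by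
    rw [← variance_of_integral_eq_zero measurable_id'.aemeasurable integral_id_gaussianReal]
    simp
  refine ⟨abs_one_div_mul_integral_comp_add_mul_mul_sub_deriv_le (memLp_id_gaussianReal 3)
    integral_id_gaussianReal hsecond hg hg' hM μ hσ, ?_⟩
  rw [integral_abs_pow_three_gaussianReal]
  ring
end

section
/- Let g : ℝ → ℝ be bounded and continuous and let σ > 0. Then the Gaussian-smoothed objective F_σ(μ) = ∫_ℝ g(x) dN(μ, σ²)(x) is differentiable in the location parameter μ at every μ ∈ ℝ, with derivative F_σ′(μ) = (1/σ²) ∫_ℝ g(x) · (x − μ) dN(μ, σ²)(x), where N(μ, σ²) is the Gaussian measure on ℝ with mean μ and variance σ². (This is the score-function/REINFORCE identity for the Gaussian location family: the ES gradient estimate is an unbiased estimate of the gradient of the smoothed objective, even for non-differentiable g.) -/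
/-!
Differentiate `m ↦ ∫ g(x) φₘ(x) dx` under the integral sign, `φₘ` being the density of
`N(m, v)`. The `m`-derivative of `φₘ(x)` is `φₘ(x) (x - m) / v`, and for `|m - μ| ≤ 1` the
inequality `(x - μ)² ≤ 2 (x - m)² + 2` dominates it uniformly by a constant multiple of the
integrable function `(|x - μ| + 1) exp (-(x - μ)² / (4 v))`; as `g` is bounded, dominated
differentiation applies.
-/

open MeasureTheory ProbabilityTheory Real
open scoped NNReal

lemma exp_neg_sq_div_le_of_abs_sub_le {a b c : ℝ} (hc : 0 ≤ c) (h : |a - b| ≤ 1) :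
    exp (-a ^ 2 / c) ≤ exp (1 / c) * exp (-b ^ 2 / (2 * c)) := by
  have hb : b ^ 2 ≤ 2 * a ^ 2 + 2 := by
    nlinarith [sq_nonneg (a + (a - b)), sq_abs (a - b), abs_nonneg (a - b)]
  rw [← exp_add, exp_le_exp, show -a ^ 2 / c = -a ^ 2 * c⁻¹ by ring,
    show 1 / c + -b ^ 2 / (2 * c) = (1 - b ^ 2 / 2) * c⁻¹ by ring]
  exact mul_le_mul_of_nonneg_right (by linarith) (inv_nonneg.2 hc)

lemma integrable_abs_add_one_mul_exp_neg_mul_sq {b : ℝ} (hb : 0 < b) :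
    Integrable fun x : ℝ => (|x| + 1) * exp (-b * x ^ 2) := by
  simp_rw [add_mul, one_mul]
  refine Integrable.add ?_ (integrable_exp_neg_mul_sq hb)
  simpa [abs_mul, abs_of_pos (exp_pos _)] using (integrable_mul_exp_neg_mul_sq hb).abs

lemma gaussianPDFReal_mul_abs_sub_le (v : ℝ≥0) {m μ : ℝ} (hm : |m - μ| ≤ 1) (x : ℝ) :
    gaussianPDFReal m v x * |x - m| ≤
      (√(2 * π * v))⁻¹ * exp (1 / (2 * v)) *
        ((|x - μ| + 1) * exp (-(4 * (v : ℝ))⁻¹ * (x - μ) ^ 2)) := by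
  have hdist : |x - m - (x - μ)| ≤ 1 := by rwa [sub_sub_sub_cancel_left, abs_sub_comm]
  have hexp := exp_neg_sq_div_le_of_abs_sub_le (by positivity : (0 : ℝ) ≤ 2 * v) hdist
  rw [show -(x - μ) ^ 2 / (2 * (2 * (v : ℝ))) = -(4 * (v : ℝ))⁻¹ * (x - μ) ^ 2 by ring] at hexp
  have habs : |x - m| ≤ |x - μ| + 1 := by
    have := abs_sub_le x μ m
    rw [abs_sub_comm μ m] at this
    linarith
  rw [gaussianPDFReal]
  calc (√(2 * π * v))⁻¹ * exp (-(x - m) ^ 2 / (2 * v)) * |x - m|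
      ≤ (√(2 * π * v))⁻¹ * (exp (1 / (2 * v)) * exp (-(4 * (v : ℝ))⁻¹ * (x - μ) ^ 2)) *
          (|x - μ| + 1) := by gcongr
    _ = _ := by ring

lemma norm_gaussianPDFReal_mul_sub_div_smul_le {E : Type*} [NormedAddCommGroup E]
    [NormedSpace ℝ E] (v : ℝ≥0) {m μ : ℝ} (hm : |m - μ| ≤ 1) {y : E} {C : ℝ} (hy : ‖y‖ ≤ C)
    (x : ℝ) :
    ‖(gaussianPDFReal m v x * ((x - m) / v)) • y‖ ≤
      C * (v : ℝ)⁻¹ * (√(2 * π * v))⁻¹ * exp (1 / (2 * v)) *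
        ((|x - μ| + 1) * exp (-(4 * (v : ℝ))⁻¹ * (x - μ) ^ 2)) := by
  have hC : 0 ≤ C := (norm_nonneg _).trans hy
  calc ‖(gaussianPDFReal m v x * ((x - m) / v)) • y‖
      = ‖y‖ * (v : ℝ)⁻¹ * (gaussianPDFReal m v x * |x - m|) := by
        rw [norm_smul, Real.norm_eq_abs, abs_mul, abs_div, NNReal.abs_eq,
          abs_of_nonneg (gaussianPDFReal_nonneg m v x)]
        ring
    _ ≤ C * (v : ℝ)⁻¹ * ((√(2 * π * v))⁻¹ * exp (1 / (2 * v)) *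
          ((|x - μ| + 1) * exp (-(4 * (v : ℝ))⁻¹ * (x - μ) ^ 2))) :=
        mul_le_mul (by gcongr) (gaussianPDFReal_mul_abs_sub_le v hm x)
          (mul_nonneg (gaussianPDFReal_nonneg m v x) (abs_nonneg _)) (by positivity)
    _ = _ := by ring

lemma hasDerivAt_gaussianPDFReal_mean (v : ℝ≥0) (x m : ℝ) :
    HasDerivAt (fun m => gaussianPDFReal m v x) (gaussianPDFReal m v x * ((x - m) / v)) m := by
  have h : HasDerivAt (fun m : ℝ => -(x - m) ^ 2 / (2 * v)) ((x - m) / v) m := by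
    refine ((((hasDerivAt_id' m).const_sub x).pow 2).neg.div_const (2 * (v : ℝ))).congr_deriv ?_
    norm_num
    ring
  simpa [gaussianPDFReal, mul_assoc] using h.exp.const_mul (√(2 * π * v))⁻¹

theorem hasDerivAt_integral_gaussianReal_mean {E : Type*} [NormedAddCommGroup E]
    [NormedSpace ℝ E] {v : ℝ≥0} (hv : v ≠ 0) {g : ℝ → E} (hg : AEStronglyMeasurable g)
    {C : ℝ} (hC : ∀ᵐ x, ‖g x‖ ≤ C) (μ : ℝ) :
    HasDerivAt (fun m => ∫ x, g x ∂gaussianReal m v)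
      ((v : ℝ)⁻¹ • ∫ x, (x - μ) • g x ∂gaussianReal μ v) μ := by
  have hdom := hasDerivAt_integral_of_dominated_loc_of_deriv_le
    (F := fun m x => gaussianPDFReal m v x • g x)
    (F' := fun m x => (gaussianPDFReal m v x * ((x - m) / v)) • g x)
    (Metric.closedBall_mem_nhds μ one_pos)
    (.of_forall fun m => (stronglyMeasurable_gaussianPDFReal m v).aestronglyMeasurable.smul hg)
    ((integrable_gaussianPDFReal μ v).smul_bdd C hg hC)
    (((measurable_gaussianPDFReal μ v).mul ((measurable_id.sub_const μ).div_const _)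
      ).aestronglyMeasurable.smul hg)
    (hC.mono fun x hx m hm => norm_gaussianPDFReal_mul_sub_div_smul_le v
      (by rwa [Metric.mem_closedBall, Real.dist_eq] at hm) hx x)
    (((integrable_abs_add_one_mul_exp_neg_mul_sq (b := (4 * (v : ℝ))⁻¹) (by positivity)).comp_sub_right μ).const_mul _)
    (.of_forall fun x m _ => (hasDerivAt_gaussianPDFReal_mean v x m).smul_const (g x))
  simp_rw [integral_gaussianReal_eq_integral_smul hv]
  refine hdom.2.congr_deriv ?_
  rw [← integral_smul]
  refine integral_congr_ae (.of_forall fun x => ?_)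
  simp only [smul_smul]
  congr 1
  ring

/-- Score-function (REINFORCE) identity for the Gaussian location family: for bounded
continuous `g : ℝ → ℝ` and `σ > 0`, the smoothed objective `F_σ(μ) = ∫ g dN(μ,σ²)` is
differentiable in the mean `μ`, with derivative
`F_σ′(μ) = (1/σ²) ∫ g(x)(x − μ) dN(μ,σ²)(x)`. -/
theorem gaussian_score_function_identity (g : ℝ → ℝ) (σ : ℝ) (hσ : 0 < σ)
    (hcont : Continuous g) (hbdd : ∃ C : ℝ, ∀ x : ℝ, |g x| ≤ C) (μ : ℝ) :
    HasDerivAt (fun m : ℝ => ∫ x : ℝ, g x ∂(gaussianReal m ⟨σ ^ 2, sq_nonneg σ⟩))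
      ((1 / σ ^ 2) * ∫ x : ℝ, g x * (x - μ) ∂(gaussianReal μ ⟨σ ^ 2, sq_nonneg σ⟩)) μ := by
  obtain ⟨C, hC⟩ := hbdd
  have hv : (⟨σ ^ 2, sq_nonneg σ⟩ : ℝ≥0) ≠ 0 := by simpa [Subtype.ext_iff] using hσ.ne'
  refine (hasDerivAt_integral_gaussianReal_mean hv hcont.aestronglyMeasurable
    (.of_forall hC) μ).congr_deriv ?_
  simp only [smul_eq_mul, mul_comm (g _), one_div]
  rfl
end

section
/- Let g : ℝ → ℝ be differentiable with globally Lipschitz derivative, let μ ∈ ℝ, σ > 0, and let N ≥ 1. If η⁽¹⁾, …, η⁽ᴺ⁾ are independent random variables each distributed as the Gaussian N(μ, σ²) on ℝ, then the N-sample ES gradient estimator ĝ = (1/(N σ²)) Σ_{j=1}^N g(η⁽ʲ⁾)(η⁽ʲ⁾ − μ) satisfies E[ĝ] = ∫_ℝ g′(x) dN(μ, σ²)(x) = F_σ′(μ), the derivative of the Gaussian-smoothed objective F_σ(μ) = ∫_ℝ g dN(μ, σ²). (Unbiasedness of the N-sample estimator in Eqn. (4) of Algorithm 1 for the gradient of the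 smoothed meta-objective.) -/
/-!
Gaussian integration by parts: since the density `φ` of `N(μ, σ²)` satisfies
`φ'(x) = -(x - μ) / σ² · φ(x)`, integrating `g φ'` by parts gives Stein's identity
`E[g(η)(η - μ)] = σ² E[g'(η)]` for `η ~ N(μ, σ²)`. Each of the `N` summands of the estimator
therefore has expectation `σ² E[g'(η)]`, and the prefactor `1 / (N σ²)` cancels. The Lipschitz
bound on `g'` gives `g'` linear and `g` quadratic growth, so every integrand is dominated by a
polynomial and is integrable because the Gaussian has moments of all orders.
-/

open MeasureTheory ProbabilityTheory Real
open scoped NNReal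

lemma LipschitzWith.abs_le_mul_one_add_abs_sub {f : ℝ → ℝ} {K : ℝ≥0} (hf : LipschitzWith K f)
    (c x : ℝ) : |f x| ≤ (|f c| + K) * (1 + |x - c|) := by
  have hdist : |f x - f c| ≤ K * |x - c| := by simpa [Real.dist_eq] using hf.dist_le_mul x c
  have htri := abs_sub_abs_le_abs_sub (f x) (f c)
  nlinarith [abs_nonneg (f c), abs_nonneg (x - c), K.coe_nonneg]

lemma abs_le_of_lipschitzWith_deriv {g : ℝ → ℝ} (hg : Differentiable ℝ g) {K : ℝ≥0}
    (hK : LipschitzWith K (deriv g)) (c x : ℝ) :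
    |g x| ≤ (|g c| + |deriv g c| + K) * (1 + |x - c|) ^ 2 := by
  have hmvt : |g x - g c| ≤ (|deriv g c| + K) * (1 + |x - c|) * |x - c| :=
    Convex.norm_image_sub_le_of_norm_deriv_le (fun y _ ↦ hg y)
      (fun y hy ↦ (hK.abs_le_mul_one_add_abs_sub c y).trans <|
        mul_le_mul_of_nonneg_left (by linarith [Set.abs_sub_left_of_mem_uIcc hy]) (by positivity))
      (convex_uIcc c x) Set.left_mem_uIcc Set.right_mem_uIcc
  have htri := abs_sub_abs_le_abs_sub (g x) (g c)
  have hA : 0 ≤ (|deriv g c| + K) * (1 + |x - c|) := by positivity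
  nlinarith [abs_nonneg (g c), abs_nonneg (x - c), mul_nonneg hA (abs_nonneg (x - c)),
    mul_nonneg (abs_nonneg (g c)) (abs_nonneg (x - c))]

namespace ProbabilityTheory

lemma hasDerivAt_gaussianPDFReal (μ : ℝ) (v : ℝ≥0) (x : ℝ) :
    HasDerivAt (gaussianPDFReal μ v) (-((x - μ) / v) * gaussianPDFReal μ v x) x := by
  have h := ((((hasDerivAt_id' x).sub_const μ).fun_pow 2).fun_neg.div_const
    (2 * (v : ℝ))).exp.const_mul (√(2 * π * v))⁻¹
  rw [gaussianPDFReal_def]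
  refine h.congr_deriv ?_
  norm_num
  ring

variable {μ : ℝ} {v : ℝ≥0}

lemma integrable_gaussianPDFReal_mul_iff (hv : v ≠ 0) {f : ℝ → ℝ} :
    Integrable (fun x ↦ gaussianPDFReal μ v x * f x) ↔ Integrable f (gaussianReal μ v) := by
  rw [gaussianReal_of_var_ne_zero μ hv,
    integrable_withDensity_iff_integrable_smul' (measurable_gaussianPDF μ v)
      (ae_of_all _ fun _ ↦ gaussianPDF_lt_top)]
  simp only [toReal_gaussianPDF, smul_eq_mul]

lemma integrable_gaussianReal_of_abs_le {f : ℝ → ℝ}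
    (hf : AEStronglyMeasurable f (gaussianReal μ v)) (c C : ℝ) (n : ℕ)
    (hbound : ∀ x, |f x| ≤ C * (1 + |x - c|) ^ n) :
    Integrable f (gaussianReal μ v) := by
  have hmom : MemLp (fun x ↦ 1 + |x - c|) n (gaussianReal μ v) :=
    (memLp_const (1 : ℝ)).add ((memLp_id_gaussianReal' n (by simp)).sub (memLp_const c)).abs
  refine Integrable.mono' (hmom.integrable_norm_pow'.const_mul C) hf (ae_of_all _ fun x ↦ ?_)
  simpa [abs_of_nonneg (by positivity : (0 : ℝ) ≤ 1 + |x - c|)] using hbound x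

/-- **Stein's lemma** for the Gaussian distribution. -/
theorem integral_mul_sub_gaussianReal (hv : v ≠ 0) {g : ℝ → ℝ} (hg : Differentiable ℝ g)
    (hg_int : Integrable g (gaussianReal μ v)) (hg'_int : Integrable (deriv g) (gaussianReal μ v))
    (hgx_int : Integrable (fun x ↦ g x * (x - μ)) (gaussianReal μ v)) :
    ∫ x, g x * (x - μ) ∂gaussianReal μ v = v * ∫ x, deriv g x ∂gaussianReal μ v := by
  rw [← integrable_gaussianPDFReal_mul_iff hv] at hg_int hg'_int hgx_int
  have hv' : (v : ℝ) ≠ 0 := NNReal.coe_ne_zero.mpr hv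
  have hparts := integral_mul_deriv_eq_deriv_mul_of_integrable (u := g) (u' := deriv g)
    (v' := fun x ↦ -((x - μ) / v) * gaussianPDFReal μ v x)
    (fun x _ ↦ (hg x).hasDerivAt) (fun x _ ↦ hasDerivAt_gaussianPDFReal μ v x)
    (by convert hgx_int.const_mul (-(v : ℝ)⁻¹) using 2 with x; simp only [Pi.mul_apply]; field_simp)
    (by convert hg'_int using 2 with x; exact mul_comm _ _)
    (by convert hg_int using 2 with x; exact mul_comm _ _)
  have hrw : ∀ x, g x * (-((x - μ) / v) * gaussianPDFReal μ v x)
      = -(v : ℝ)⁻¹ * (gaussianPDFReal μ v x * (g x * (x - μ))) := fun x ↦ by field_simp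
  simp only [hrw, integral_const_mul] at hparts
  simp only [integral_gaussianReal_eq_integral_smul hv, smul_eq_mul]
  rw [integral_congr_ae (ae_of_all _ fun x ↦ mul_comm (deriv g x) _), neg_mul, neg_inj,
    inv_mul_eq_iff_eq_mul₀ hv'] at hparts
  exact hparts

section LipschitzDeriv

variable {g : ℝ → ℝ} {K : ℝ≥0}

lemma integrable_gaussianReal_of_lipschitzWith_deriv (hg : Differentiable ℝ g)
    (hK : LipschitzWith K (deriv g)) : Integrable g (gaussianReal μ v) :=
  integrable_gaussianReal_of_abs_le hg.continuous.aestronglyMeasurable μ _ 2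
    (abs_le_of_lipschitzWith_deriv hg hK μ)

lemma integrable_deriv_gaussianReal_of_lipschitzWith (hK : LipschitzWith K (deriv g)) :
    Integrable (deriv g) (gaussianReal μ v) :=
  integrable_gaussianReal_of_abs_le hK.continuous.aestronglyMeasurable μ _ 1
    (by simpa using hK.abs_le_mul_one_add_abs_sub μ)

lemma integrable_mul_sub_gaussianReal_of_lipschitzWith_deriv (hg : Differentiable ℝ g)
    (hK : LipschitzWith K (deriv g)) : Integrable (fun x ↦ g x * (x - μ)) (gaussianReal μ v) := by
  refine integrable_gaussianReal_of_abs_le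
    (hg.continuous.mul (continuous_sub_right μ)).aestronglyMeasurable μ
    (|g μ| + |deriv g μ| + K) 3 fun x ↦ ?_
  have hgx := abs_le_of_lipschitzWith_deriv hg hK μ x
  rw [abs_mul, pow_succ, ← mul_assoc]
  exact mul_le_mul hgx (by linarith [abs_nonneg (x - μ)]) (abs_nonneg _)
    ((abs_nonneg _).trans hgx)

theorem integral_mul_sub_gaussianReal_of_lipschitzWith_deriv (hv : v ≠ 0)
    (hg : Differentiable ℝ g) (hK : LipschitzWith K (deriv g)) :
    ∫ x, g x * (x - μ) ∂gaussianReal μ v = v * ∫ x, deriv g x ∂gaussianReal μ v :=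
  integral_mul_sub_gaussianReal hv hg (integrable_gaussianReal_of_lipschitzWith_deriv hg hK)
    (integrable_deriv_gaussianReal_of_lipschitzWith hK)
    (integrable_mul_sub_gaussianReal_of_lipschitzWith_deriv hg hK)

end LipschitzDeriv

end ProbabilityTheory

theorem es_estimator_unbiased_general (g : ℝ → ℝ) (μ σ : ℝ) (hσ : 0 < σ)
    (hg : Differentiable ℝ g) (hLip : ∃ K : NNReal, LipschitzWith K (deriv g))
    (N : ℕ) (hN : 1 ≤ N)
    (Ω : Type*) [MeasurableSpace Ω] (P : Measure Ω)
    (η : Fin N → Ω → ℝ) (hmeas : ∀ j, Measurable (η j))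
    (hlaw : ∀ j, Measure.map (η j) P = gaussianReal μ ⟨σ ^ 2, sq_nonneg σ⟩) :
    ∫ ω, (1 / (N * σ ^ 2)) * ∑ j : Fin N, g (η j ω) * (η j ω - μ) ∂P
      = ∫ x : ℝ, deriv g x ∂(gaussianReal μ ⟨σ ^ 2, sq_nonneg σ⟩) := by
  obtain ⟨K, hK⟩ := hLip
  have hv : (⟨σ ^ 2, sq_nonneg σ⟩ : ℝ≥0) ≠ 0 := fun h ↦
    (pow_pos hσ 2).ne' (congrArg NNReal.toReal h)
  have hint : Integrable (fun x ↦ g x * (x - μ)) (gaussianReal μ ⟨σ ^ 2, sq_nonneg σ⟩) :=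
    integrable_mul_sub_gaussianReal_of_lipschitzWith_deriv hg hK
  have hterm (j : Fin N) : ∫ ω, g (η j ω) * (η j ω - μ) ∂P
      = σ ^ 2 * ∫ x, deriv g x ∂gaussianReal μ ⟨σ ^ 2, sq_nonneg σ⟩ :=
    (HasLaw.integral_comp ⟨(hmeas j).aemeasurable, hlaw j⟩ hint.aestronglyMeasurable).trans
      (integral_mul_sub_gaussianReal_of_lipschitzWith_deriv hv hg hK)
  have hterm_int (j : Fin N) : Integrable (fun ω ↦ g (η j ω) * (η j ω - μ)) P :=
    ((hlaw j).symm ▸ hint).comp_measurable (hmeas j)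
  have hN' : (N : ℝ) ≠ 0 := Nat.cast_ne_zero.mpr (by omega)
  rw [integral_const_mul, integral_finsetSum _ fun j _ ↦ hterm_int j]
  simp only [hterm, Finset.sum_const, Finset.card_univ, Fintype.card_fin, nsmul_eq_mul]
  field_simp

/-- Unbiasedness of the N-sample ES gradient estimator of Eqn. (4) of Algorithm 1: for
`g : ℝ → ℝ` differentiable with globally Lipschitz derivative, `σ > 0`, and i.i.d. samples
`η⁽¹⁾, …, η⁽ᴺ⁾ ~ N(μ, σ²)`, the estimator `ĝ = (1/(Nσ²)) Σ_j g(η⁽ʲ⁾)(η⁽ʲ⁾ − μ)` satisfies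
`E[ĝ] = ∫ g′ dN(μ, σ²) = F_σ′(μ)`, the derivative of the Gaussian-smoothed objective. -/
theorem es_estimator_unbiased (g : ℝ → ℝ) (μ σ : ℝ) (hσ : 0 < σ)
    (hg : Differentiable ℝ g) (hLip : ∃ K : NNReal, LipschitzWith K (deriv g))
    (N : ℕ) (hN : 1 ≤ N)
    (Ω : Type*) [MeasurableSpace Ω] (P : Measure Ω) [IsProbabilityMeasure P]
    (η : Fin N → Ω → ℝ) (hmeas : ∀ j, Measurable (η j))
    (hindep : iIndepFun η P)
    (hlaw : ∀ j, Measure.map (η j) P = gaussianReal μ ⟨σ ^ 2, sq_nonneg σ⟩) :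
    ∫ ω, (1 / (N * σ ^ 2)) * ∑ j : Fin N, g (η j ω) * (η j ω - μ) ∂P
      = ∫ x : ℝ, deriv g x ∂(gaussianReal μ ⟨σ ^ 2, sq_nonneg σ⟩) :=
  es_estimator_unbiased_general g μ σ hσ hg hLip N hN Ω P η hmeas hlaw
end
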